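/- Let p > 3 be a prime with p ≡ 2 (mod 3), and let a be an integer with p ∤ a. Then V_p(x + a/(2x²)) = (2p − 1)/3. -/

import Mathlib

open Finset

def T (p : ℕ) [NeZero p] : Finset (ZMod p) := univ.filter (· ≠ 0)
def fib (p : ℕ) [NeZero p] (α b : ZMod p) : Finset (ZMod p) :=
  univ.filter (fun x => x ≠ 0 ∧ 2*x^3 + α = 2*b*x^2)
def Sv (p : ℕ) [NeZero p] (α : ZMod p) : Finset (ZMod p) := univ.filter (fun b => (fib p α b).Nonempty)
noncomputable def phi (p : ℕ) (α x : ZMod p) : ZMod p := (2*x^3 + α) * (2*x^2)⁻¹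
def Cv (p : ℕ) [NeZero p] (α x : ZMod p) : Finset (ZMod p) := univ.filter (fun y => 2*x^2*y^2 = α*(x+y))

section
variable {p : ℕ} [Fact p.Prime]

lemma nat_ne (n : ℕ) (h0 : 0 < n) (h : n < p) : ((n : ℕ) : ZMod p) ≠ 0 := by
  rw [Ne, ZMod.natCast_eq_zero_iff]
  exact fun hd => absurd (Nat.le_of_dvd h0 hd) (by omega)

lemma two_ne (hp3 : 3 < p) : (2 : ZMod p) ≠ 0 := by
  have := nat_ne (p := p) 2 (by norm_num) (by omega); simpa using this

lemma three_ne (hp3 : 3 < p) : (3 : ZMod p) ≠ 0 := by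
  have := nat_ne (p := p) 3 (by norm_num) (by omega); simpa using this

lemma char_ne_two (hp3 : 3 < p) : ringChar (ZMod p) ≠ 2 := by
  rw [ZMod.ringChar_zmod_n]; omega

lemma Tcard : (T p).card = p - 1 := by
  rw [T, filter_ne', card_erase_of_mem (mem_univ _), card_univ, ZMod.card]

lemma cube_inj (hp2 : p % 3 = 2) : Function.Injective (fun x : ZMod p => x ^ 3) := by
  intro x y h
  simp only at h
  rcases eq_or_ne y 0 with rfl | hy
  · rw [zero_pow (by norm_num)] at h
    exact pow_eq_zero_iff (by norm_num) |>.mp h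
  · have hx : x ≠ 0 := by
      intro rfl'
      subst rfl'
      rw [zero_pow (by norm_num)] at h
      exact hy (pow_eq_zero_iff (n := 3) (by norm_num) |>.mp h.symm)
    set z := x * y⁻¹ with hz
    have hzne : z ≠ 0 := mul_ne_zero hx (inv_ne_zero hy)
    have h3 : z ^ 3 = 1 := by
      rw [hz, mul_pow, h, inv_pow, mul_inv_cancel₀ (pow_ne_zero _ hy)]
    have h1 : z ^ (p - 1) = 1 := ZMod.pow_card_sub_one_eq_one hzne
    have ho3 : orderOf z ∣ 3 := orderOf_dvd_of_pow_eq_one h3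
    have hop : orderOf z ∣ p - 1 := orderOf_dvd_of_pow_eq_one h1
    have : orderOf z ∣ Nat.gcd 3 (p - 1) := Nat.dvd_gcd ho3 hop
    have hg : Nat.gcd 3 (p - 1) = 1 := by
      have : ¬ (3 ∣ (p - 1)) := by
        have := Nat.Prime.one_lt (Fact.out : p.Prime)
        omega
      exact (Nat.prime_three.coprime_iff_not_dvd).mpr this
    rw [hg, Nat.dvd_one] at this
    have hz1 : z = 1 := orderOf_eq_one_iff.mp this
    rw [hz, mul_inv_eq_one₀ hy] at hz1
    exact hz1

lemma cube_bij (hp2 : p % 3 = 2) : Function.Bijective (fun x : ZMod p => x ^ 3) :=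
  Finite.injective_iff_bijective.mp (cube_inj hp2)

lemma phi_iff (hp3 : 3 < p) {x : ZMod p} (hx : x ≠ 0) (α b : ZMod p) :
    2*x^3 + α = 2*b*x^2 ↔ phi p α x = b := by
  have h2 : (2*x^2 : ZMod p) ≠ 0 := mul_ne_zero (two_ne hp3) (pow_ne_zero _ hx)
  rw [phi, mul_inv_eq_iff_eq_mul₀ h2]
  constructor <;> intro h <;> linear_combination h

lemma fib_eq (hp3 : 3 < p) (α b : ZMod p) :
    fib p α b = (T p).filter (fun x => phi p α x = b) := by
  ext x
  simp only [fib, T, mem_filter, mem_univ, true_and, and_congr_right_iff]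
  intro hx
  exact phi_iff hp3 hx α b

lemma self_mem_fib (hp3 : 3 < p) {x : ZMod p} (hx : x ≠ 0) (α : ZMod p) :
    x ∈ fib p α (phi p α x) := by
  simp only [fib, mem_filter, mem_univ, true_and]
  exact ⟨hx, (phi_iff hp3 hx α _).mpr rfl⟩

lemma phi_mapsTo (hp3 : 3 < p) (α : ZMod p) : ∀ x ∈ T p, phi p α x ∈ Sv p α := by
  intro x hx
  simp only [T, mem_filter, mem_univ, true_and] at hx
  simp only [Sv, mem_filter, mem_univ, true_and]
  exact ⟨x, self_mem_fib hp3 hx α⟩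

lemma sum_k (hp3 : 3 < p) (α : ZMod p) :
    ∑ b ∈ Sv p α, (fib p α b).card = p - 1 := by
  rw [← Tcard (p := p)]
  rw [show ∑ b ∈ Sv p α, (fib p α b).card
      = ∑ b ∈ Sv p α, ((T p).filter (fun x => phi p α x = b)).card from
    sum_congr rfl fun b _ => by rw [fib_eq hp3]]
  exact (card_eq_sum_card_fiberwise (phi_mapsTo hp3 α)).symm

lemma four_ne (hp3 : 3 < p) : (4 : ZMod p) ≠ 0 := by
  have h2 := two_ne (p := p) hp3
  have : (4 : ZMod p) = 2^2 := by norm_num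
  rw [this]
  exact pow_ne_zero _ h2

lemma eight_ne (hp3 : 3 < p) : (8 : ZMod p) ≠ 0 := by
  have h2 := two_ne (p := p) hp3
  have : (8 : ZMod p) = 2^3 := by norm_num
  rw [this]
  exact pow_ne_zero _ h2

lemma card_Cv (hp3 : 3 < p) {α x : ZMod p} (hα : α ≠ 0) (hx : x ≠ 0) :
    ((Cv p α x).card : ℤ) = quadraticChar (ZMod p) (α^2 + 8*α*x^3) + 1 := by
  have h4 : (4*x^2 : ZMod p) ≠ 0 := mul_ne_zero (four_ne hp3) (pow_ne_zero _ hx)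
  have hw : (4*x^2 : ZMod p)*(4*x^2)⁻¹ = 1 := mul_inv_cancel₀ h4
  have key : (Cv p α x).card = {u : ZMod p | u^2 = α^2 + 8*α*x^3}.toFinset.card := by
    refine Finset.card_bij' (fun y _ => 4*x^2*y - α) (fun u _ => (u+α) * (4*x^2)⁻¹) ?_ ?_ ?_ ?_
    · intro y hy
      simp only [Cv, mem_filter, mem_univ, true_and] at hy
      rw [Set.mem_toFinset, Set.mem_setOf_eq]
      linear_combination (8*x^2) * hy
    · intro u hu
      rw [Set.mem_toFinset, Set.mem_setOf_eq] at hu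
      simp only [Cv, mem_filter, mem_univ, true_and]
      linear_combination 2*x^2*((4*x^2)⁻¹)^2*hu + (α*(4*x^2)⁻¹*(α+u+4*x^3) + α*x)*hw
    · intro y _; linear_combination y*hw
    · intro u _; linear_combination (u+α)*hw
  rw [key, quadraticChar_card_sqrts (char_ne_two hp3)]

lemma sum_char (hp3 : 3 < p) (hp2 : p % 3 = 2) {α : ZMod p} (hα : α ≠ 0) :
    ∑ x ∈ T p, quadraticChar (ZMod p) (α^2 + 8*α*x^3) = -1 := by
  have h8 : (8 : ZMod p) ≠ 0 := eight_ne hp3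
  have step1 : ∑ x ∈ T p, quadraticChar (ZMod p) (α^2 + 8*α*x^3)
      = ∑ u ∈ T p, quadraticChar (ZMod p) (α^2 + 8*α*u) := by
    apply Finset.sum_bij (i := fun x _ => x^3)
    · intro x hx
      simp only [T, mem_filter, mem_univ, true_and] at hx ⊢
      exact pow_ne_zero _ hx
    · intro x _ y _ h
      exact cube_inj hp2 h
    · intro u hu
      simp only [T, mem_filter, mem_univ, true_and] at hu
      obtain ⟨x, hx⟩ := (cube_bij hp2).surjective u
      have hxne : x ≠ 0 := by
        intro h0
        apply hu
        rw [← hx, h0]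
        norm_num
      exact ⟨x, by simp [T, hxne], hx⟩
    · intros; rfl
  have step2 : ∑ u ∈ T p, quadraticChar (ZMod p) (α^2 + 8*α*u)
      = ∑ v ∈ univ.erase (α^2), quadraticChar (ZMod p) v := by
    apply Finset.sum_bij (i := fun u _ => α^2 + 8*α*u)
    · intro u hu
      simp only [T, mem_filter, mem_univ, true_and] at hu
      simp only [mem_erase, mem_univ, and_true]
      intro h
      exact mul_ne_zero (mul_ne_zero h8 hα) hu (by linear_combination h)
    · intro u _ v _ h
      have := mul_ne_zero h8 hα
      field_simp at h
      exact mul_left_cancel₀ h8 (add_left_cancel h)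
    · intro v hv
      simp only [mem_erase, mem_univ, and_true] at hv
      refine ⟨(v - α^2) * (8*α)⁻¹, ?_, ?_⟩
      · simp only [T, mem_filter, mem_univ, true_and]
        intro h
        apply hv
        have h8a : (8*α : ZMod p) ≠ 0 := mul_ne_zero h8 hα
        have := mul_eq_zero.mp h
        rcases this with h' | h'
        · linear_combination h'
        · exact absurd h' (inv_ne_zero h8a)
      · field_simp; ring
    · intros; rfl
  rw [step1, step2]
  have hz := quadraticChar_sum_zero (char_ne_two (p := p) hp3)
  have h1 : (quadraticChar (ZMod p)) (α^2) + ∑ x ∈ univ.erase (α^2), (quadraticChar (ZMod p)) x = 0 := by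
    rw [Finset.add_sum_erase univ (fun v => (quadraticChar (ZMod p)) v) (mem_univ (α^2))]
    exact hz
  rw [quadraticChar_sq_one' hα] at h1
  linarith

lemma fib_phi (hp3 : 3 < p) {α x : ZMod p} (hα : α ≠ 0) (hx : x ≠ 0) :
    fib p α (phi p α x) = insert x (Cv p α x) := by
  have h2 := two_ne (p := p) hp3
  have h2x : (2*x^2 : ZMod p) ≠ 0 := mul_ne_zero h2 (pow_ne_zero _ hx)
  ext y
  simp only [fib, Cv, mem_filter, mem_univ, true_and, mem_insert]
  constructor
  · rintro ⟨hy0, heq⟩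
    have E : (2*y^3+α)*(2*x^2) = 2*y^2*(2*x^3+α) := by
      rw [heq, phi]
      field_simp
    rcases eq_or_ne y x with h | h
    · exact Or.inl h
    · right
      have h2' : (2 : ZMod p)*((y-x)*(2*x^2*y^2 - α*(x+y))) = 0 := by linear_combination E
      have h3' := mul_eq_zero.mp h2'
      rcases h3' with h' | h'
      · exact absurd h' h2
      · rcases mul_eq_zero.mp h' with h'' | h''
        · exact absurd (sub_eq_zero.mp h'') h
        · linear_combination h''
  · rintro (rfl | hy)
    · have := self_mem_fib hp3 hx α
      simp only [fib, mem_filter, mem_univ, true_and] at this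
      exact this
    · have hy0 : y ≠ 0 := by
        rintro rfl
        apply mul_ne_zero hα hx
        linear_combination -hy
      refine ⟨hy0, ?_⟩
      have E : (2*y^3+α)*(2*x^2) = 2*y^2*(2*x^3+α) := by
        linear_combination (2*(y-x))*hy
      rw [phi]
      field_simp
      linear_combination (y - x)*hy

lemma mem_Cv_self (hp3 : 3 < p) (hp2 : p % 3 = 2) {α x x₀ : ZMod p} (hα : α ≠ 0)
    (hx : x ≠ 0) (hx₀ : x₀^3 = α) :
    x ∈ Cv p α x ↔ x = x₀ := by
  have h2 := two_ne (p := p) hp3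
  simp only [Cv, mem_filter, mem_univ, true_and]
  constructor
  · intro h
    have h' : (2*x : ZMod p)*(x^3 - α) = 0 := by linear_combination h
    rcases mul_eq_zero.mp h' with h'' | h''
    · exact absurd h'' (mul_ne_zero h2 hx)
    · have : x^3 = x₀^3 := by rw [hx₀]; linear_combination h''
      exact cube_inj hp2 this
  · rintro rfl
    linear_combination 2*x*hx₀

lemma card_fib_phi (hp3 : 3 < p) (hp2 : p % 3 = 2) {α x x₀ : ZMod p} (hα : α ≠ 0)
    (hx : x ≠ 0) (hx₀ : x₀^3 = α) :
    ((fib p α (phi p α x)).card : ℤ)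
      = ((Cv p α x).card : ℤ) + (if x = x₀ then 0 else 1) := by
  rw [fib_phi hp3 hα hx]
  by_cases h : x = x₀
  · rw [if_pos h, Finset.insert_eq_self.mpr ((mem_Cv_self hp3 hp2 hα hx hx₀).mpr h)]
    ring
  · rw [if_neg h, Finset.card_insert_of_notMem
      (fun hc => h ((mem_Cv_self hp3 hp2 hα hx hx₀).mp hc))]
    push_cast
    ring

lemma k_le_3 (hp3 : 3 < p) (α b : ZMod p) : (fib p α b).card ≤ 3 := by
  classical
  have h2 := two_ne (p := p) hp3
  set q : Polynomial (ZMod p) :=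
    Polynomial.C 2 * Polynomial.X^3 - Polynomial.C (2*b) * Polynomial.X^2 + Polynomial.C α with hq
  have hqd : q.natDegree = 3 := by
    rw [hq]
    compute_degree!
  have hq0 : q ≠ 0 := fun h => by simp [h] at hqd
  have hsub : fib p α b ⊆ q.roots.toFinset := by
    intro x hxm
    simp only [fib, mem_filter, mem_univ, true_and] at hxm
    rw [Multiset.mem_toFinset, Polynomial.mem_roots hq0]
    simp only [Polynomial.IsRoot, hq, Polynomial.eval_add, Polynomial.eval_sub,
      Polynomial.eval_mul, Polynomial.eval_pow, Polynomial.eval_C, Polynomial.eval_X]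
    linear_combination hxm.2
  calc (fib p α b).card ≤ q.roots.toFinset.card := Finset.card_le_card hsub
    _ ≤ Multiset.card q.roots := Multiset.toFinset_card_le _
    _ ≤ q.natDegree := Polynomial.card_roots' q
    _ = 3 := hqd

lemma fib_b0 (hp3 : 3 < p) {α x₀ b₀ y₀ : ZMod p} (hα : α ≠ 0) (hx₀ : x₀^3 = α)
    (h2b : 2*b₀ = 3*x₀) (h2y : 2*y₀ = -x₀) :
    fib p α b₀ = {x₀, y₀} := by
  have h2 := two_ne (p := p) hp3
  have hx₀ne : x₀ ≠ 0 := fun h => hα (by rw [← hx₀, h]; norm_num)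
  have hy₀ne : y₀ ≠ 0 := by
    intro h
    apply hx₀ne
    have h0 : -x₀ = 0 := by rw [← h2y, h, mul_zero]
    exact neg_eq_zero.mp h0
  ext x
  simp only [fib, mem_filter, mem_univ, true_and, mem_insert, mem_singleton]
  constructor
  · rintro ⟨hx, heq⟩
    have heq2 : 2*x^3 + x₀^3 = 3*x₀*x^2 := by
      linear_combination heq + x^2*h2b + hx₀
    have hf : (x-x₀)^2*(2*x-2*y₀) = 0 := by
      linear_combination heq2 - (x-x₀)^2 * h2y
    rcases mul_eq_zero.mp hf with h' | h'
    · left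
      have := pow_eq_zero_iff (n := 2) (by norm_num) |>.mp h'
      exact sub_eq_zero.mp this
    · right
      have h'' : (2:ZMod p)*(x - y₀) = 0 := by linear_combination h'
      rcases mul_eq_zero.mp h'' with h3 | h3
      · exact absurd h3 h2
      · exact sub_eq_zero.mp h3
  · rintro (rfl | rfl)
    · exact ⟨hx₀ne, by linear_combination -hx₀ - x^2*h2b⟩
    · refine ⟨hy₀ne, ?_⟩
      have h8 := eight_ne (p := p) hp3
      apply mul_left_cancel₀ h8
      linear_combination (2*(4*x^2 - 2*x₀*x + x₀^2) - 6*x₀*(2*x - x₀))*h2y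
        - 8*x^2*h2b - 8*hx₀

lemma x0_ne_y0 (hp3 : 3 < p) {α x₀ y₀ : ZMod p} (hα : α ≠ 0) (hx₀ : x₀^3 = α)
    (h2y : 2*y₀ = -x₀) : x₀ ≠ y₀ := by
  have hx₀ne : x₀ ≠ 0 := fun h => hα (by rw [← hx₀, h]; norm_num)
  intro h
  apply mul_ne_zero (three_ne (p := p) hp3) hx₀ne
  linear_combination h2y + 2*h

lemma card_fib_b0 (hp3 : 3 < p) {α x₀ b₀ y₀ : ZMod p} (hα : α ≠ 0) (hx₀ : x₀^3 = α)
    (h2b : 2*b₀ = 3*x₀) (h2y : 2*y₀ = -x₀) :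
    (fib p α b₀).card = 2 := by
  rw [fib_b0 hp3 hα hx₀ h2b h2y]
  rw [Finset.card_insert_of_notMem (by simp [x0_ne_y0 hp3 hα hx₀ h2y])]
  simp

lemma case_helper (hp3 : 3 < p) (hp2 : p % 3 = 2) {α x₀ b₀ b r s t : ZMod p}
    (hα : α ≠ 0) (hx₀ : x₀^3 = α) (h2b : 2*b₀ = 3*x₀) (hr0 : r ≠ 0)
    (htdef : t = b - r - s) (ht : t = r)
    (hA : r*s + r*t + s*t = 0) (hB : α + 2*r*s*t = 0) : b = b₀ := by
  have h2 := two_ne (p := p) hp3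
  have hA' : r*(r + 2*s) = 0 := by linear_combination hA - (r+s)*ht
  have hs2 : r + 2*s = 0 := by
    rcases mul_eq_zero.mp hA' with h' | h'
    · exact absurd h' hr0
    · exact h'
  have hr3 : r^3 = α := by linear_combination -hB + 2*r*s*ht + r^2*hs2
  have hrx : r = x₀ := cube_inj hp2 (show r^3 = x₀^3 by rw [hr3, hx₀])
  apply mul_left_cancel₀ h2
  linear_combination (-2)*htdef + 2*ht + 3*hrx + hs2 - h2b

lemma card2_imp (hp3 : 3 < p) (hp2 : p % 3 = 2) {α x₀ b₀ b : ZMod p}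
    (hα : α ≠ 0) (hx₀ : x₀^3 = α) (h2b : 2*b₀ = 3*x₀)
    (hcard : (fib p α b).card = 2) : b = b₀ := by
  have h2 := two_ne (p := p) hp3
  obtain ⟨r, s, hrs, hfib⟩ := Finset.card_eq_two.mp hcard
  have hr := hfib ▸ (Finset.mem_insert_self r {s})
  have hs := hfib ▸ (Finset.mem_insert_of_mem (Finset.mem_singleton_self s))
  simp only [fib, mem_filter, mem_univ, true_and] at hr hs
  set t := b - r - s with htdef
  have e1 : -2*(r*s + r*t + s*t)*r + (α + 2*r*s*t) = 0 := by
    linear_combination hr.2 + (-2*r^2)*htdef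
  have e2 : -2*(r*s + r*t + s*t)*s + (α + 2*r*s*t) = 0 := by
    linear_combination hs.2 + (-2*s^2)*htdef
  have hA : r*s + r*t + s*t = 0 := by
    have h' : (2:ZMod p)*((r*s + r*t + s*t)*(s - r)) = 0 := by linear_combination e1 - e2
    rcases mul_eq_zero.mp h' with h'' | h''
    · exact absurd h'' h2
    · rcases mul_eq_zero.mp h'' with h3 | h3
      · exact h3
      · exact absurd (sub_eq_zero.mp h3) hrs.symm
  have hB : α + 2*r*s*t = 0 := by linear_combination e1 + 2*r*hA
  have ht0 : t ≠ 0 := by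
    intro h
    apply hα
    linear_combination hB - 2*r*s*h
  have htfib : t ∈ fib p α b := by
    simp only [fib, mem_filter, mem_univ, true_and]
    exact ⟨ht0, by linear_combination (-2*t)*hA + hB + 2*t^2*htdef⟩
  rw [hfib] at htfib
  simp only [mem_insert, mem_singleton] at htfib
  rcases htfib with ht | ht
  · exact case_helper hp3 hp2 hα hx₀ h2b hr.1 htdef ht hA hB
  · exact case_helper (b := b) (r := s) (s := r) (t := t) hp3 hp2 hα hx₀ h2b hs.1
      (by linear_combination htdef) ht (by linear_combination hA) (by linear_combination hB)

lemma main_count (hp3 : 3 < p) (hp2 : p % 3 = 2) {α : ZMod p} (hα : α ≠ 0) :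
    3 * ((Sv p α).card : ℤ) = 2 * (p:ℤ) - 1 := by
  obtain ⟨x₀, hx₀⟩ := (cube_bij (p := p) hp2).surjective α
  have hx₀' : x₀^3 = α := hx₀
  have hx₀ne : x₀ ≠ 0 := fun h => hα (by rw [← hx₀', h]; norm_num)
  have h2 := two_ne (p := p) hp3
  have hple : 1 ≤ p := by omega
  set b₀ : ZMod p := 3*x₀*2⁻¹ with hb₀
  set y₀ : ZMod p := -(x₀*2⁻¹) with hy₀
  have h2b : 2*b₀ = 3*x₀ := by rw [hb₀]; field_simp; try ring
  have h2y : 2*y₀ = -x₀ := by rw [hy₀]; field_simp; try ring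
  have K1 : ∑ b ∈ Sv p α, ((fib p α b).card : ℤ) = (p:ℤ) - 1 := by
    rw [← Nat.cast_sum, sum_k hp3 α, Nat.cast_sub hple]
    norm_num
  have hb₀S : b₀ ∈ Sv p α := by
    simp only [Sv, mem_filter, mem_univ, true_and]
    rw [fib_b0 hp3 hα hx₀' h2b h2y]
    exact ⟨x₀, mem_insert_self _ _⟩
  have hx₀T : x₀ ∈ T p := by simp [T, hx₀ne]
  have K2 : ∑ b ∈ Sv p α, ((fib p α b).card : ℤ)^2 = 2*(p:ℤ) - 4 := by
    have e1 : ∀ b ∈ Sv p α, ((fib p α b).card : ℤ)^2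
        = ∑ x ∈ (T p).filter (fun x => phi p α x = b), ((fib p α (phi p α x)).card : ℤ) := by
      intro b hb
      rw [Finset.sum_congr rfl (fun x hx =>
        by rw [(Finset.mem_filter.mp hx).2] : ∀ x ∈ (T p).filter (fun x => phi p α x = b),
          ((fib p α (phi p α x)).card : ℤ) = ((fib p α b).card : ℤ))]
      rw [Finset.sum_const, ← fib_eq hp3, nsmul_eq_mul, sq]
    rw [Finset.sum_congr rfl e1, Finset.sum_fiberwise_of_maps_to (phi_mapsTo hp3 α)]
    have e2 : ∀ x ∈ T p, ((fib p α (phi p α x)).card : ℤ)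
        = ((quadraticChar (ZMod p) (α^2 + 8*α*x^3) : ℤ) + 1) + (if x = x₀ then 0 else 1) := by
      intro x hx
      have hxne : x ≠ 0 := by simpa [T] using hx
      rw [card_fib_phi hp3 hp2 hα hxne hx₀', card_Cv hp3 hα hxne]
    rw [Finset.sum_congr rfl e2, Finset.sum_add_distrib, Finset.sum_add_distrib]
    have s1 : ∑ x ∈ T p, (quadraticChar (ZMod p) (α^2+8*α*x^3) : ℤ) = -1 :=
      sum_char hp3 hp2 hα
    have s2 : ∑ x ∈ T p, (1:ℤ) = (p:ℤ) - 1 := by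
      rw [Finset.sum_const, Tcard, nsmul_eq_mul, Nat.cast_sub hple]
      push_cast
      ring
    have s3 : ∑ x ∈ T p, (if x = x₀ then (0:ℤ) else 1) = (p:ℤ) - 2 := by
      have e3 : ∀ x ∈ T p, (if x = x₀ then (0:ℤ) else 1)
          = 1 - (if x = x₀ then 1 else 0) := by
        intro x _; split <;> ring
      rw [Finset.sum_congr rfl e3, Finset.sum_sub_distrib,
        Finset.sum_ite_eq' (T p) x₀ (fun _ => (1:ℤ)), if_pos hx₀T, s2]
      ring
    rw [s1, s2, s3]
    ring
  have K3 : ∑ b ∈ Sv p α, (if b = b₀ then (1:ℤ) else 0) = 1 := by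
    rw [Finset.sum_ite_eq' (Sv p α) b₀ (fun _ => (1:ℤ)), if_pos hb₀S]
  have main : ∀ b ∈ Sv p α, (3:ℤ)
      = 4*((fib p α b).card : ℤ) - ((fib p α b).card : ℤ)^2 - (if b = b₀ then 1 else 0) := by
    intro b hb
    have hk1 : 1 ≤ (fib p α b).card := Finset.card_pos.mpr (by
      simpa [Sv, mem_filter] using hb)
    have hk3 : (fib p α b).card ≤ 3 := k_le_3 hp3 α b
    by_cases hbb : b = b₀
    · rw [if_pos hbb, hbb, card_fib_b0 hp3 hα hx₀' h2b h2y]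
      norm_num
    · rw [if_neg hbb]
      have hk2 : (fib p α b).card ≠ 2 := fun h => hbb (card2_imp hp3 hp2 hα hx₀' h2b h)
      rcases Nat.lt_or_ge ((fib p α b).card) 2 with h | h
      · have hc : (fib p α b).card = 1 := by omega
        rw [hc]; norm_num
      · have hc : (fib p α b).card = 3 := by omega
        rw [hc]; norm_num
  calc 3 * ((Sv p α).card : ℤ) = ∑ _b ∈ Sv p α, (3:ℤ) := by
        rw [Finset.sum_const, nsmul_eq_mul]; ring
    _ = ∑ b ∈ Sv p α, (4*((fib p α b).card : ℤ) - ((fib p α b).card : ℤ)^2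
          - (if b = b₀ then 1 else 0)) := Finset.sum_congr rfl main
    _ = 4*(∑ b ∈ Sv p α, ((fib p α b).card : ℤ)) - (∑ b ∈ Sv p α, ((fib p α b).card : ℤ)^2)
          - (∑ b ∈ Sv p α, if b = b₀ then (1:ℤ) else 0) := by
        rw [Finset.sum_sub_distrib, Finset.sum_sub_distrib, Finset.mul_sum]
    _ = 2 * (p:ℤ) - 1 := by rw [K1, K2, K3]; ring

end

theorem stmt_4 (p : ℕ) (hp : p.Prime) (hp3 : 3 < p) (hp2 : p % 3 = 2)
    (a : ℤ) (ha : ¬ (p : ℤ) ∣ a) :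
    3 * (((Finset.range p).filter (fun b : ℕ =>
      ∃ x ∈ Finset.Icc 1 (p - 1),
        2 * (x : ℤ) ^ 3 + (a) ≡ 2 * (b : ℤ) * (x : ℤ) ^ 2 [ZMOD (p : ℤ)])).card : ℤ) = 2 * (p : ℤ) - 1 := by
  haveI : Fact p.Prime := ⟨hp⟩
  set α : ZMod p := (a : ZMod p) with hαdef
  have hα : α ≠ 0 := by
    rw [hαdef, Ne, ZMod.intCast_zmod_eq_zero_iff_dvd]
    exact ha
  have hcard : ((Finset.range p).filter (fun b : ℕ =>
      ∃ x ∈ Finset.Icc 1 (p - 1),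
        2 * (x : ℤ) ^ 3 + (a) ≡ 2 * (b : ℤ) * (x : ℤ) ^ 2 [ZMOD (p : ℤ)])).card
      = (Sv p α).card := by
    apply Finset.card_nbij (fun b : ℕ => ((b : ℕ) : ZMod p))
    · intro b hb
      simp only [Finset.mem_coe, Finset.mem_filter, Finset.mem_range] at hb
      obtain ⟨hbp, x, hxI, hmod⟩ := hb
      simp only [Finset.mem_Icc] at hxI
      have hxp : x < p := by omega
      have hξ : ((x : ℕ) : ZMod p) ≠ 0 := by
        rw [Ne, ZMod.natCast_eq_zero_iff]
        intro hd
        have := Nat.le_of_dvd (by omega) hd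
        omega
      simp only [Finset.mem_coe, Sv, Finset.mem_filter, Finset.mem_univ, true_and]
      refine ⟨(x : ZMod p), ?_⟩
      simp only [fib, Finset.mem_filter, Finset.mem_univ, true_and]
      refine ⟨hξ, ?_⟩
      have := (ZMod.intCast_eq_intCast_iff _ _ _).mpr hmod
      push_cast at this
      rw [hαdef]
      exact this
    · intro b1 hb1 b2 hb2 h
      simp only [Finset.coe_filter, Set.mem_setOf_eq, Finset.mem_range] at hb1 hb2
      have h1 := ZMod.val_natCast_of_lt hb1.1
      have h2 := ZMod.val_natCast_of_lt hb2.1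
      rw [← h1, ← h2]
      exact congrArg ZMod.val h
    · intro β hβ
      simp only [Finset.mem_coe] at hβ
      simp only [Sv, Finset.mem_filter, Finset.mem_univ, true_and] at hβ
      obtain ⟨ξ, hξ⟩ := hβ
      simp only [fib, Finset.mem_filter, Finset.mem_univ, true_and] at hξ
      obtain ⟨hξ0, hξeq⟩ := hξ
      refine ⟨β.val, ?_, ?_⟩
      · simp only [Finset.coe_filter, Set.mem_setOf_eq, Finset.mem_range]
        refine ⟨ZMod.val_lt β, ⟨ξ.val, ?_, ?_⟩⟩
        · simp only [Finset.mem_Icc]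
          have h1 : ξ.val ≠ 0 := by
            rw [Ne, ZMod.val_eq_zero]
            exact hξ0
          have h2 := ZMod.val_lt ξ
          omega
        · rw [← ZMod.intCast_eq_intCast_iff]
          push_cast
          rw [ZMod.natCast_val, ZMod.natCast_val, ZMod.cast_id, ZMod.cast_id]
          rw [← hαdef]
          exact hξeq
      · exact ZMod.natCast_rightInverse β
  rw [hcard]
  exact main_count hp3 hp2 hα
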